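/- arXiv:2104.07369 — 2 statements merged into one kernel-verified Lean document; each statement's English description precedes it below -/
import Mathlib

section
/- Let w be a packed word of length n and let 1 ≤ c ≤ n−1. Then c is a global descent of w if and only if there exist (necessarily unique) nonempty packed words u and v with |u| = c and w = u/v. In particular, for any nonempty packed words u and v, the word u/v is packed and |u| is a global descent of u/v. -/
def wmax (w : List ℕ) : ℕ := w.foldr max 0

def IsPacked (w : List ℕ) : Prop :=
  (∀ x ∈ w, 0 < x) ∧ ∀ i : ℕ, 0 < i → i ≤ wmax w → i ∈ w

def shiftW (m : ℕ) (w : List ℕ) : List ℕ := w.map (· + m)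

def slash (u v : List ℕ) : List ℕ := shiftW (wmax v) u ++ v

def GlobalDescent (w : List ℕ) (c : ℕ) : Prop :=
  1 ≤ c ∧ c + 1 ≤ w.length ∧ ∀ a ∈ w.take c, ∀ b ∈ w.drop c, b < a

@[simp] lemma wmax_nil : wmax [] = 0 := rfl

@[simp] lemma wmax_cons (a : ℕ) (w : List ℕ) : wmax (a :: w) = max a (wmax w) := rfl

lemma le_wmax_of_mem {x : ℕ} {w : List ℕ} (h : x ∈ w) : x ≤ wmax w := by
  induction w with
  | nil => simp at h
  | cons a t ih =>
    rcases List.mem_cons.mp h with rfl | h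
    · exact le_max_left _ _
    · exact (ih h).trans (le_max_right _ _)

lemma wmax_mem {w : List ℕ} (h : w ≠ []) : wmax w ∈ w := by
  induction w with
  | nil => exact absurd rfl h
  | cons a t ih =>
    rcases eq_or_ne t [] with rfl | ht
    · simp
    · rcases max_choice a (wmax t) with hmax | hmax <;> rw [wmax_cons, hmax]
      · exact List.mem_cons_self
      · exact List.mem_cons_of_mem a (ih ht)

lemma wmax_append (u v : List ℕ) : wmax (u ++ v) = max (wmax u) (wmax v) := by
  induction u with
  | nil => simp
  | cons a t ih => simp [ih, max_assoc]

lemma wmax_shiftW {w : List ℕ} (h : w ≠ []) (m : ℕ) : wmax (shiftW m w) = wmax w + m := by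
  induction w with
  | nil => exact absurd rfl h
  | cons a t ih =>
    rcases eq_or_ne t [] with rfl | ht
    · simp [shiftW]
    · simp only [shiftW, List.map_cons, wmax_cons] at ih ⊢
      rw [ih ht, max_add_add_right]

lemma wmax_shiftW_le (m : ℕ) (w : List ℕ) : wmax (shiftW m w) ≤ wmax w + m := by
  rcases eq_or_ne w [] with rfl | h
  · simp [shiftW]
  · exact (wmax_shiftW h m).le

@[simp] lemma length_shiftW (m : ℕ) (w : List ℕ) : (shiftW m w).length = w.length :=
  List.length_map _

lemma mem_shiftW {m x : ℕ} {w : List ℕ} : x ∈ shiftW m w ↔ ∃ y ∈ w, y + m = x :=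
  List.mem_map

lemma shiftW_injective (m : ℕ) : Function.Injective (shiftW m) :=
  List.map_injective_iff.mpr (add_left_injective m)

lemma shiftW_map_sub {m : ℕ} {w : List ℕ} (h : ∀ a ∈ w, m ≤ a) :
    shiftW m (w.map (· - m)) = w := by
  rw [shiftW, List.map_map]
  exact List.map_congr_left (fun a ha => Nat.sub_add_cancel (h a ha)) |>.trans (List.map_id' w)

lemma slash_inj {u v u' v' : List ℕ} (h : slash u v = slash u' v')
    (hlen : u.length = u'.length) : u = u' ∧ v = v' := by
  obtain ⟨hu, rfl⟩ := List.append_inj h (by simp [hlen])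
  exact ⟨shiftW_injective _ hu, rfl⟩

lemma IsPacked.slash {u v : List ℕ} (hu : IsPacked u) (hv : IsPacked v) :
    IsPacked (slash u v) := by
  refine ⟨fun x hx => ?_, fun i hi hle => ?_⟩
  · rcases List.mem_append.mp hx with hx | hx
    · obtain ⟨y, hy, rfl⟩ := mem_shiftW.mp hx
      exact Nat.add_pos_left (hu.1 y hy) _
    · exact hv.1 x hx
  · rw [_root_.slash, wmax_append] at hle
    by_cases him : i ≤ wmax v
    · exact List.mem_append_right _ (hv.2 i hi him)
    · have hle_u : i ≤ wmax u + wmax v :=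
        ((le_max_iff.mp hle).resolve_right him).trans (wmax_shiftW_le _ _)
      refine List.mem_append_left _ (mem_shiftW.mpr ⟨i - wmax v, hu.2 _ ?_ ?_, ?_⟩) <;> omega

/-- Shifting `u` past `max v` keeps its letters apart from those of `v`, so packedness
splits between the two factors. -/
lemma isPacked_slash_iff {u v : List ℕ} (hu : ∀ x ∈ u, 0 < x) :
    IsPacked (slash u v) ↔ IsPacked u ∧ IsPacked v := by
  refine ⟨fun h => ⟨⟨hu, fun i hi hle => ?_⟩, ⟨fun x hx => ?_, fun i hi hle => ?_⟩⟩,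
    fun h => h.1.slash h.2⟩
  · have hne : u ≠ [] := by rintro rfl; simp at hle; omega
    have hmem : i + wmax v ∈ slash u v := h.2 _ (by omega) <| by
      rw [slash, wmax_append, wmax_shiftW hne]; omega
    rcases List.mem_append.mp hmem with hmem | hmem
    · obtain ⟨y, hy, hyi⟩ := mem_shiftW.mp hmem
      rwa [Nat.add_right_cancel hyi] at hy
    · have := le_wmax_of_mem hmem; omega
  · exact h.1 x (List.mem_append_right _ hx)
  · have hmem : i ∈ slash u v := h.2 i hi (by rw [slash, wmax_append]; omega)
    rcases List.mem_append.mp hmem with hmem | hmem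
    · obtain ⟨y, hy, rfl⟩ := mem_shiftW.mp hmem
      have := hu y hy; omega
    · exact hmem

lemma globalDescent_slash {u v : List ℕ} (hu : ∀ x ∈ u, 0 < x) (hune : u ≠ []) (hvne : v ≠ []) :
    GlobalDescent (slash u v) u.length := by
  have hlen : (shiftW (wmax v) u).length = u.length := length_shiftW _ _
  refine ⟨List.length_pos_iff.mpr hune, ?_, fun a ha b hb => ?_⟩
  · have := List.length_pos_iff.mpr hvne
    simp only [slash, List.length_append, hlen]; omega
  · rw [slash, List.take_left' hlen] at ha
    rw [slash, List.drop_left' hlen] at hb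
    obtain ⟨y, hy, rfl⟩ := mem_shiftW.mp ha
    have := hu y hy
    have := le_wmax_of_mem hb
    omega

/-- Every letter before a global descent exceeds `max` of the suffix, so subtracting it
recovers the left factor. -/
lemma GlobalDescent.exists_eq_slash {w : List ℕ} {c : ℕ} (h : GlobalDescent w c) :
    ∃ u v, (∀ x ∈ u, 0 < x) ∧ u ≠ [] ∧ v ≠ [] ∧ u.length = c ∧ w = slash u v := by
  obtain ⟨hc, hcl, hgd⟩ := h
  set v := w.drop c
  have hvne : v ≠ [] := List.ne_nil_of_length_pos (by simp [v]; omega)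
  have hbig : ∀ a ∈ w.take c, wmax v < a := fun a ha => hgd a ha _ (wmax_mem hvne)
  have hulen : ((w.take c).map (· - wmax v)).length = c := by simp; omega
  refine ⟨(w.take c).map (· - wmax v), v, ?_, ?_, hvne, hulen, ?_⟩
  · simp only [List.mem_map]
    rintro _ ⟨a, ha, rfl⟩
    have := hbig a ha; omega
  · exact List.ne_nil_of_length_pos (by omega)
  · rw [slash, shiftW_map_sub fun a ha => (hbig a ha).le, List.take_append_drop]

theorem globalDescent_iff_slash_factorization :
    (∀ (w : List ℕ) (c : ℕ), IsPacked w → 1 ≤ c → c + 1 ≤ w.length →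
      (GlobalDescent w c ↔
        ∃! p : List ℕ × List ℕ,
          IsPacked p.1 ∧ IsPacked p.2 ∧ p.1 ≠ [] ∧ p.2 ≠ [] ∧
          p.1.length = c ∧ w = slash p.1 p.2)) ∧
    (∀ u v : List ℕ, IsPacked u → IsPacked v → u ≠ [] → v ≠ [] →
      IsPacked (slash u v) ∧ GlobalDescent (slash u v) u.length) := by
  refine ⟨fun w c hw _ _ => ⟨fun hgd => ?_, ?_⟩,
    fun u v hu hv hune hvne => ⟨hu.slash hv, globalDescent_slash hu.1 hune hvne⟩⟩
  · obtain ⟨u, v, hpos, hune, hvne, rfl, rfl⟩ := hgd.exists_eq_slash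
    obtain ⟨hu, hv⟩ := (isPacked_slash_iff hpos).mp hw
    refine ⟨(u, v), ⟨hu, hv, hune, hvne, rfl, rfl⟩, ?_⟩
    rintro ⟨u', v'⟩ ⟨-, -, -, -, hlen, heq⟩
    obtain ⟨rfl, rfl⟩ := slash_inj heq.symm hlen
    rfl
  · rintro ⟨⟨u, v⟩, ⟨hu, -, hune, hvne, rfl, rfl⟩, -⟩
    exact globalDescent_slash hu.1 hune hvne
end

section
/- Let n ≥ 0, p > 0 and let I ⊆ {1,…,n+p} have cardinality p. For every packed word w of length n, the word φ_I(w) is a packed word of length n+p whose maximal letter occurs exactly at the positions belonging to I, i.e. φ_I(w) ∈ PW_{n+p}^I. -/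
/-- `phi I w` inserts occurrences of the new maximum letter `wmax w + 1` so that they
end up exactly at the (1-based) positions in `I`; the remaining positions carry the
letters of `w` in order. -/
def phi (I : Finset ℕ) (w : List ℕ) : List ℕ :=
  (List.range (w.length + I.card)).map (fun j =>
    if j + 1 ∈ I then wmax w + 1
    else w.getD ((List.range j).countP (fun k => decide (k + 1 ∉ I))) 0)

/-- The maximal letter of `w` occurs exactly at the (1-based) positions belonging to `I`. -/
def maxAt (w : List ℕ) (I : Finset ℕ) : Prop :=
  (∀ i ∈ I, 1 ≤ i ∧ i ≤ w.length) ∧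
  ∀ j, j < w.length → (w.getD j 0 = wmax w ↔ j + 1 ∈ I)

/-!
The letters of `φ_I(w)` off `I` are those of `w` in order: position `j` carries the letter of
`w` whose index is the number of positions before `j` outside `I`. Since `I` has exactly `p`
elements in `[1, n + p]`, this count runs through all of `0, …, n - 1`, so `φ_I(w)` has the
same letters as `w` plus the new letter `max(w) + 1`, which sits exactly on `I`.
-/

open Finset

lemma wmax_le_iff {w : List ℕ} {B : ℕ} : wmax w ≤ B ↔ ∀ x ∈ w, x ≤ B := by
  induction w with
  | nil => simp [wmax]
  | cons a t ih => simp [wmax, ← ih]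

lemma le_wmax {w : List ℕ} {x : ℕ} (hx : x ∈ w) : x ≤ wmax w :=
  wmax_le_iff.1 le_rfl x hx

lemma infinite_setOf_add_one_notMem (I : Finset ℕ) : {k : ℕ | k + 1 ∉ I}.Infinite := by
  have hfin : ((· + 1) ⁻¹' (I : Set ℕ)).Finite :=
    I.finite_toSet.preimage (add_left_injective 1).injOn
  exact hfin.infinite_compl

lemma count_add_one_notMem_eq_sub_card {I : Finset ℕ} {m : ℕ} (hI : I ⊆ Icc 1 m) :
    Nat.count (· + 1 ∉ I) m = m - #I := by
  have hshift : Nat.count (· + 1 ∈ I) m = #I := by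
    have h0 : (0 : ℕ) ∉ I := fun h => by simpa using hI h
    have hsub : I ⊆ range (m + 1) := fun i hi => by
      rw [mem_range]; have := mem_Icc.1 (hI hi); omega
    have hsucc := Nat.count_succ' (· ∈ I) m
    simp only [h0, if_false, add_zero] at hsucc
    rw [← hsucc, Nat.count_eq_card_filter_range, filter_mem_eq_inter, inter_eq_right.2 hsub]
  have hsplit := card_filter_add_card_filter_not (s := range m) (fun k => k + 1 ∈ I)
  rw [← Nat.count_eq_card_filter_range, ← Nat.count_eq_card_filter_range, hshift,
    card_range] at hsplit
  omega

def phiLetter (I : Finset ℕ) (w : List ℕ) (j : ℕ) : ℕ :=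
  if j + 1 ∈ I then wmax w + 1 else w.getD (Nat.count (· + 1 ∉ I) j) 0

lemma phi_eq_map (I : Finset ℕ) (w : List ℕ) :
    phi I w = (List.range (w.length + #I)).map (phiLetter I w) := rfl

lemma length_phi (I : Finset ℕ) (w : List ℕ) : (phi I w).length = w.length + #I := by
  simp [phi_eq_map]

lemma getD_phi {I : Finset ℕ} {w : List ℕ} {j : ℕ} (hj : j < w.length + #I) :
    (phi I w).getD j 0 = phiLetter I w j := by
  simp [phi_eq_map, hj]

lemma mem_phi {I : Finset ℕ} {w : List ℕ} {x : ℕ} :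
    x ∈ phi I w ↔ ∃ j < w.length + #I, phiLetter I w j = x := by
  simp [phi_eq_map]

section
variable {I : Finset ℕ} {w : List ℕ} (hI : I ⊆ Icc 1 (w.length + #I))
include hI

lemma count_lt_length {j : ℕ} (hj : j < w.length + #I) (hjI : j + 1 ∉ I) :
    Nat.count (· + 1 ∉ I) j < w.length :=
  calc Nat.count (· + 1 ∉ I) j
      < Nat.count (· + 1 ∉ I) (j + 1) := Nat.count_lt_count_succ_iff.2 hjI
    _ ≤ Nat.count (· + 1 ∉ I) (w.length + #I) := Nat.count_monotone _ hj
    _ = w.length := by rw [count_add_one_notMem_eq_sub_card hI]; omega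

lemma phiLetter_mem {j : ℕ} (hj : j < w.length + #I) (hjI : j + 1 ∉ I) :
    phiLetter I w j ∈ w := by
  rw [phiLetter, if_neg hjI, List.getD_eq_getElem _ _ (count_lt_length hI hj hjI)]
  exact List.getElem_mem _

lemma mem_phi_iff {x : ℕ} : x ∈ phi I w ↔ (I.Nonempty ∧ x = wmax w + 1) ∨ x ∈ w := by
  rw [mem_phi]
  constructor
  · rintro ⟨j, hj, rfl⟩
    by_cases hjI : j + 1 ∈ I
    · exact .inl ⟨⟨_, hjI⟩, if_pos hjI⟩
    · exact .inr (phiLetter_mem hI hj hjI)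
  · rintro (⟨⟨i, hi⟩, rfl⟩ | hx)
    · have hbounds := mem_Icc.1 (hI hi)
      refine ⟨i - 1, by omega, if_pos ?_⟩
      rwa [Nat.sub_add_cancel hbounds.1]
    · obtain ⟨t, ht, rfl⟩ := List.getElem_of_mem hx
      have hcount : t < Nat.count (· + 1 ∉ I) (w.length + #I) := by
        rw [count_add_one_notMem_eq_sub_card hI]; omega
      have hinf := infinite_setOf_add_one_notMem I
      refine ⟨Nat.nth (· + 1 ∉ I) t, Nat.nth_lt_of_lt_count hcount, ?_⟩
      rw [phiLetter, if_neg (Nat.nth_mem_of_infinite hinf t), Nat.count_nth_of_infinite hinf,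
        List.getD_eq_getElem]

lemma wmax_phi (hne : I.Nonempty) : wmax (phi I w) = wmax w + 1 := by
  refine le_antisymm (wmax_le_iff.2 fun x hx => ?_)
    (le_wmax ((mem_phi_iff hI).2 (.inl ⟨hne, rfl⟩)))
  rcases (mem_phi_iff hI).1 hx with ⟨-, rfl⟩ | hx
  · rfl
  · exact (le_wmax hx).trans (Nat.le_succ _)

lemma IsPacked.phi (hw : IsPacked w) (hne : I.Nonempty) : IsPacked (phi I w) := by
  refine ⟨fun x hx => ?_, fun i hi hle => ?_⟩
  · rcases (mem_phi_iff hI).1 hx with ⟨-, rfl⟩ | hx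
    · exact Nat.succ_pos _
    · exact hw.1 x hx
  · rw [wmax_phi hI hne] at hle
    rcases hle.eq_or_lt with rfl | hlt
    · exact (mem_phi_iff hI).2 (.inl ⟨hne, rfl⟩)
    · exact (mem_phi_iff hI).2 (.inr (hw.2 i hi (Nat.lt_succ_iff.1 hlt)))

lemma maxAt_phi (hne : I.Nonempty) : maxAt (phi I w) I := by
  refine ⟨fun i hi => ?_, fun j hj => ?_⟩
  · rw [length_phi]; exact mem_Icc.1 (hI hi)
  · rw [length_phi] at hj
    rw [getD_phi hj, wmax_phi hI hne]
    by_cases hjI : j + 1 ∈ I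
    · simp [phiLetter, hjI]
    · have hle := le_wmax (phiLetter_mem hI hj hjI)
      simp only [hjI, iff_false]; omega

end

theorem phi_mem_PW_I (n p : ℕ) (hp : 0 < p) (I : Finset ℕ)
    (hI : I ⊆ Finset.Icc 1 (n + p)) (hcard : I.card = p)
    (w : List ℕ) (hw : IsPacked w) (hlen : w.length = n) :
    IsPacked (phi I w) ∧ (phi I w).length = n + p ∧ maxAt (phi I w) I := by
  subst hlen hcard
  have hne : I.Nonempty := card_pos.1 hp
  exact ⟨hw.phi hI hne, length_phi I w, maxAt_phi hI hne⟩
end
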